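/- arXiv:math/0605060 — 2 statements merged into one kernel-verified Lean document; each statement's English description precedes it below -/
import Mathlib

section
/- The saillance code is a bijection from S_n to the set of sub-diagonal sequences of length n. -/
open Finset

namespace Paper

/-- The word of `σ` at 0-based position `i`, with 0-based values (`0` outside range). -/
def wrd {n : ℕ} (σ : Equiv.Perm (Fin n)) (i : ℕ) : ℕ :=
  if h : i < n then (σ ⟨i, h⟩ : ℕ) else 0

/-- The descent set of `σ`, in 1-based positions: `{ i ∈ {1,…,n-1} | σ(i) > σ(i+1) }`. -/
def Des {n : ℕ} (σ : Equiv.Perm (Fin n)) : Finset ℕ :=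
  (Finset.Ioo 0 n).filter fun i => wrd σ i < wrd σ (i - 1)

/-- The major index: the sum of the (1-based) descent positions. -/
def maj {n : ℕ} (σ : Equiv.Perm (Fin n)) : ℕ := ∑ i ∈ Des σ, i

/-- The number of descents. -/
def des {n : ℕ} (σ : Equiv.Perm (Fin n)) : ℕ := (Des σ).card

/-- The number of inversions. -/
def inv {n : ℕ} (σ : Equiv.Perm (Fin n)) : ℕ :=
  (Finset.univ.filter fun p : Fin n × Fin n => p.1 < p.2 ∧ σ p.2 < σ p.1).card

/-- The Lehmer code, as a function `ℕ → ℕ` (0-based index, zero outside `[0, n)`):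
`Lc σ i = #{ j > i | σ(j) < σ(i) }`. -/
def Lc {n : ℕ} (σ : Equiv.Perm (Fin n)) (i : ℕ) : ℕ :=
  if h : i < n then (Finset.univ.filter fun j : Fin n => i < (j : ℕ) ∧ σ j < σ ⟨i, h⟩).card
  else 0

/-- The inversion code (invcode) is the Lehmer code of the inverse. -/
def Ic {n : ℕ} (σ : Equiv.Perm (Fin n)) : ℕ → ℕ := Lc σ⁻¹

/-- The word of a permutation, with 1-based values. -/
def word {n : ℕ} (σ : Equiv.Perm (Fin n)) : List ℕ := List.ofFn fun i => (σ i : ℕ) + 1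

/-- The major index of a word: the sum of the 1-based positions `t` with `w_t > w_{t+1}`. -/
def majL (l : List ℕ) : ℕ :=
  ∑ t ∈ Finset.range (l.length - 1), if l.getD (t + 1) 0 < l.getD t 0 then t + 1 else 0

/-- The major code, as a function `ℕ → ℕ` (0-based index `i`, i.e. paper's `m_{i+1}`):
`m_i = maj(σ^{(i)}) - maj(σ^{(i+1)})` where `σ^{(i)}` keeps only the letters `≥ i`. -/
def Mc {n : ℕ} (σ : Equiv.Perm (Fin n)) (i : ℕ) : ℕ :=
  majL ((word σ).filter fun x => decide (i + 1 ≤ x)) -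
    majL ((word σ).filter fun x => decide (i + 2 ≤ x))

/-- The saillance code, as a function `ℕ → ℕ` (0-based index `i`, i.e. about the letter of
0-based value `i`): the number of letters of `σ` that are `≥` the rightmost letter located to
the left of `i` and greater than `i` (0 if there is no such letter). -/
def Sc {n : ℕ} (σ : Equiv.Perm (Fin n)) (i : ℕ) : ℕ :=
  if h : i < n then
    let L := Finset.univ.filter fun j : Fin n => j < σ⁻¹ ⟨i, h⟩ ∧ (⟨i, h⟩ : Fin n) < σ j
    if hL : L.Nonempty then n - (σ (L.max' hL) : ℕ) else 0
  else 0

/-- Sub-diagonal sequences, as functions `ℕ → ℕ` supported on `[0, n)` with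
`c_i ≤ n - 1 - i` there (0-based; i.e. `0 ≤ c_i ≤ n - i` in 1-based indexing). -/
def SubDiag (n : ℕ) : Set (ℕ → ℕ) :=
  {c | (∀ i, i < n → c i + i < n) ∧ ∀ i, n ≤ i → c i = 0}

/-- The permutation `τ_M(β)` of `{0,…,n}`: `τ_M(β)(i) = des(β) - j` if `i` is the `j`-th
descent of `β`, and `τ_M(β)(i) = des(β) + j - 1` if `i` is the `j`-th rise (position `0`
counting as a rise). -/
def tauM {n : ℕ} (β : Equiv.Perm (Fin n)) (i : ℕ) : ℕ :=
  if i ∈ Des β then des β - ((Des β).filter fun d => d ≤ i).card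
  else des β + ((Finset.range (i + 1)).filter fun r => r ∉ Des β).card - 1

/-- The permutation `τ_S(β)` of `{0,…,n}`: `τ_S(β)(0) = 0` and `τ_S(β)(i) = n + 1 - β(i)`
(1-based values) for `1 ≤ i ≤ n`. -/
def tauS {n : ℕ} (β : Equiv.Perm (Fin n)) (i : ℕ) : ℕ :=
  if h : 1 ≤ i ∧ i ≤ n then n - (β ⟨i - 1, by omega⟩ : ℕ) else 0

/-- The complete homogeneous symmetric polynomial `h_k(X_m)` in the variables
`x_0, …, x_m`. -/
noncomputable def hpoly (k m : ℕ) : MvPolynomial ℕ ℤ :=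
  ∑ f ∈ Finset.univ.filter (fun f : Fin k → Fin (m + 1) => ∀ a b : Fin k, a ≤ b → f a ≤ f b),
    ∏ t : Fin k, MvPolynomial.X ((f t : ℕ))

/-- The (proper) descent set of a composition `I = (i_1,…,i_r)`:
`{i_1, i_1+i_2, …, i_1+⋯+i_{r-1}}`. -/
def DesComp (I : List ℕ) : Finset ℕ :=
  (Finset.range (I.length - 1)).image fun k => (I.take (k + 1)).sum

end Paper


/-!
Among the letters `≥ i` of `σ`, the letter `i` stands immediately after the letter
`n - Sc σ i` (at the front when `Sc σ i = 0`). So the code, read from `i = n - 1` down to `0`,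
rebuilds the relative order of the letters `≥ i` step by step, and `Sc` is injective; it lands
in the sub-diagonal sequences, of which there are `n!`, so it is a bijection onto them.
-/

theorem Equiv.eq_of_le_iff_le {α β : Type*} [LinearOrder α] [WellFoundedLT α]
    {f g : β ≃ α} (h : ∀ a b, f a ≤ f b ↔ g a ≤ g b) : f = g := by
  let e : α ≃o α := ⟨g.symm.trans f, fun {x y} => by simp [h]⟩
  have he : e = OrderIso.refl α := Subsingleton.elim _ _
  ext b
  simpa [e] using DFunLike.congr_fun he (g b)

namespace Paper

variable {n : ℕ}

def leftGreater (σ : Equiv.Perm (Fin n)) (i : Fin n) : Finset (Fin n) :=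
  univ.filter fun j => j < σ⁻¹ i ∧ i < σ j

theorem Sc_eq (σ : Equiv.Perm (Fin n)) (i : Fin n) :
    Sc σ i = if h : (leftGreater σ i).Nonempty then n - (σ ((leftGreater σ i).max' h) : ℕ)
      else 0 := by
  simp only [Sc, dif_pos i.isLt, Fin.eta]
  rfl

theorem Sc_add_lt (σ : Equiv.Perm (Fin n)) (i : Fin n) : Sc σ i + i < n := by
  rw [Sc_eq]
  split_ifs with h
  · have hi : i < σ ((leftGreater σ i).max' h) :=
      (mem_filter.1 ((leftGreater σ i).max'_mem h)).2.2
    have := (σ ((leftGreater σ i).max' h)).isLt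
    omega
  · simp

theorem Sc_mem_subDiag (σ : Equiv.Perm (Fin n)) : Sc σ ∈ SubDiag n :=
  ⟨fun i hi => Sc_add_lt σ ⟨i, hi⟩, fun i hi => by simp [Sc, not_lt.2 hi]⟩

/-- When `Sc σ i = 0` there is no such `c`: then no letter `b > i` precedes `i`. -/
theorem inv_lt_inv_iff_exists_Sc (σ : Equiv.Perm (Fin n)) {i b : Fin n} (hb : i < b) :
    σ⁻¹ b < σ⁻¹ i ↔ ∃ c : Fin n, (c : ℕ) + Sc σ i = n ∧ σ⁻¹ b ≤ σ⁻¹ c := by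
  have hb_mem : σ⁻¹ b < σ⁻¹ i → σ⁻¹ b ∈ leftGreater σ i := fun h => by
    simpa [leftGreater] using ⟨h, hb⟩
  rw [Sc_eq]
  split_ifs with hL
  · set m := (leftGreater σ i).max' hL
    have hm : m < σ⁻¹ i ∧ i < σ m := (mem_filter.1 ((leftGreater σ i).max'_mem hL)).2
    have hmn := (σ m).isLt
    constructor
    · intro h
      exact ⟨σ m, by omega, by simpa using (leftGreater σ i).le_max' _ (hb_mem h)⟩
    · rintro ⟨c, hc, hbc⟩
      obtain rfl : c = σ m := Fin.ext (by omega)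
      exact (hbc.trans_eq (by simp)).trans_lt hm.1
  · refine ⟨fun h => (hL ⟨_, hb_mem h⟩).elim, ?_⟩
    rintro ⟨c, hc, -⟩
    have := c.isLt
    omega

def SameOrderFrom (σ τ : Equiv.Perm (Fin n)) (i : ℕ) : Prop :=
  ∀ a b : Fin n, i ≤ a → i ≤ b → (σ⁻¹ a ≤ σ⁻¹ b ↔ τ⁻¹ a ≤ τ⁻¹ b)

theorem SameOrderFrom.of_succ {σ τ : Equiv.Perm (Fin n)} {i : ℕ}
    (h : SameOrderFrom σ τ (i + 1)) (hSc : Sc σ i = Sc τ i) : SameOrderFrom σ τ i := by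
  have precedes : ∀ a b : Fin n, (a : ℕ) = i → a < b → (σ⁻¹ b < σ⁻¹ a ↔ τ⁻¹ b < τ⁻¹ a) := by
    rintro a b rfl hab
    rw [inv_lt_inv_iff_exists_Sc σ hab, inv_lt_inv_iff_exists_Sc τ hab, hSc]
    refine exists_congr fun c => and_congr_right fun hc => h b c hab ?_
    have := Sc_add_lt τ a
    omega
  intro a b ha hb
  rcases ha.eq_or_lt with ha | ha <;> rcases hb.eq_or_lt with hb | hb
  · obtain rfl : a = b := Fin.ext (by omega)
    exact iff_of_true le_rfl le_rfl
  · simpa only [not_lt] using (precedes a b ha.symm (Fin.lt_def.2 (by omega))).not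
  · have hba : b < a := Fin.lt_def.2 (by omega)
    rw [(σ⁻¹.injective.ne hba.ne').le_iff_lt, (τ⁻¹.injective.ne hba.ne').le_iff_lt]
    exact precedes b a hb.symm hba
  · exact h a b ha hb

theorem Sc_injective : Function.Injective (Sc : Equiv.Perm (Fin n) → ℕ → ℕ) := by
  intro σ τ h
  have hzero : SameOrderFrom σ τ 0 :=
    Nat.decreasingInduction (motive := fun i _ => SameOrderFrom σ τ i)
      (fun i _ hi => hi.of_succ (congrFun h i)) (fun a _ ha => by omega) (Nat.zero_le n)
  exact inv_inj.1 (Equiv.eq_of_le_iff_le fun a b => hzero a b (Nat.zero_le _) (Nat.zero_le _))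

def subDiagEquivPi (n : ℕ) : SubDiag n ≃ ∀ i : Fin n, Fin (n - i) where
  toFun c i := ⟨c.1 i, by have := c.2.1 i i.isLt; omega⟩
  invFun f := ⟨fun i => if h : i < n then f ⟨i, h⟩ else 0,
    fun i hi => by
      have : (f ⟨i, hi⟩ : ℕ) < n - i := (f ⟨i, hi⟩).isLt
      simp only [dif_pos hi]
      omega,
    fun i hi => dif_neg (not_lt.2 hi)⟩
  left_inv c := by
    ext i
    by_cases h : i < n
    · simp [h]
    · simp [h, c.2.2 i (not_lt.1 h)]
  right_inv f := by
    ext i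
    simp

theorem ncard_subDiag (n : ℕ) : (SubDiag n).ncard = n.factorial := by
  rw [← Nat.card_coe_set_eq, Nat.card_congr (subDiagEquivPi n), Nat.card_pi]
  simp only [Nat.card_eq_fintype_card, Fintype.card_fin]
  rw [Fin.prod_univ_eq_prod_range (n - ·), ← Nat.descFactorial_eq_prod_range,
    Nat.descFactorial_self]

end Paper

/-- The saillance code is a bijection from `S_n` onto the set of sub-diagonal sequences. -/
theorem saillance_code_bijective (n : ℕ) :
    Set.BijOn (fun σ : Equiv.Perm (Fin n) => Paper.Sc σ) Set.univ (Paper.SubDiag n) := by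
  refine ⟨fun σ _ => Paper.Sc_mem_subDiag σ, Paper.Sc_injective.injOn, ?_⟩
  have hcard :
      (Paper.SubDiag n).ncard ≤ (Set.range (Paper.Sc : Equiv.Perm (Fin n) → ℕ → ℕ)).ncard := by
    rw [Paper.ncard_subDiag, Set.ncard_range_of_injective Paper.Sc_injective, Nat.card_perm,
      Nat.card_fin]
  have hrange : Set.range Paper.Sc = Paper.SubDiag n :=
    Set.eq_of_subset_of_ncard_le (Set.range_subset_iff.2 Paper.Sc_mem_subDiag) hcard
      (Set.finite_of_ncard_pos (by rw [Paper.ncard_subDiag]; positivity))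
  rw [Set.SurjOn, Set.image_univ, hrange]
end

section
/- Single-insertion shuffle lemma for the major code: let β ∈ S_n and let 1⧢_i β be the permutation obtained by shifting β up by 1 and inserting letter 1 at position i+1. Then the first component of the major code of 1⧢_i β equals τ_M(β)(i), where τ_M(β) is the permutation of {0,...,n} defined by: τ_M(β)(i) = des(β) − j if i is the j-th descent of β, and τ_M(β)(i) = des(β) + j − 1 if i is the j-th rise of β (position 0 counting as a rise); moreover the remaining components of the major code of 1⧢_i β equal the major code of β. -/
open Finset

/-!
Inserting a new least letter at position `i` of the (shifted) word of `β` creates a descent at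
`i` (when `i > 0`), kills the descent of `β` at `i` if there was one, moves every descent of `β`
beyond `i` one step to the right, and keeps the others. Hence
`maj (1⧢_i β) - maj β = i - [i ∈ Des β] i + #{d ∈ Des β | i < d}`, which is `τ_M(β)(i)`.
The letters `≥ 2` of `1⧢_i β` spell the word of `β` shifted by one, and `maj` is invariant under
order-preserving relabelling, so the other components of the major code are those of `β`.
-/

theorem List.filter_insertIdx_of_neg {α : Type*} {p : α → Bool} {a : α} (ha : p a = false) :
    ∀ (l : List α) (i : ℕ), (l.insertIdx i a).filter p = l.filter p
  | [], 0 | _ :: _, 0 => by simp [ha]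
  | [], _ + 1 => rfl
  | b :: l, i + 1 => by
    rw [List.insertIdx_succ_cons, List.filter_cons, List.filter_cons,
      List.filter_insertIdx_of_neg ha l i]

namespace Paper

def descentsOf (f : ℕ → ℕ) (m : ℕ) : Finset ℕ :=
  (Ioo 0 m).filter fun d => f d < f (d - 1)

theorem Des_eq_descentsOf {n : ℕ} (σ : Equiv.Perm (Fin n)) : Des σ = descentsOf (wrd σ) n := rfl

theorem descentsOf_congr_of_strictMono {f g φ : ℕ → ℕ} {m : ℕ} (hφ : StrictMono φ)
    (h : ∀ t < m, f t = φ (g t)) : descentsOf f m = descentsOf g m := by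
  refine filter_congr fun d hd => ?_
  rw [mem_Ioo] at hd
  rw [h d hd.2, h (d - 1) (by omega), hφ.lt_iff_lt]

theorem majL_eq_sum_descentsOf (l : List ℕ) :
    majL l = ∑ d ∈ descentsOf (l.getD · 0) l.length, d := by
  rw [descentsOf, sum_filter, majL]
  cases l.length with
  | zero => rfl
  | succ m =>
    rw [← Ico_add_one_left_eq_Ioo, sum_Ico_eq_sum_range]
    refine sum_congr (by simp) fun t _ => ?_
    simp only [zero_add, Nat.add_comm 1 t, Nat.add_sub_cancel]

theorem majL_map_of_strictMono {φ : ℕ → ℕ} (hφ : StrictMono φ) (l : List ℕ) :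
    majL (l.map φ) = majL l := by
  rw [majL_eq_sum_descentsOf, majL_eq_sum_descentsOf, List.length_map,
    descentsOf_congr_of_strictMono hφ]
  intro t ht
  rw [List.getD_eq_getElem _ _ (by simpa using ht), List.getD_eq_getElem _ _ ht,
    List.getElem_map]

theorem word_getElem {n : ℕ} (σ : Equiv.Perm (Fin n)) {t : ℕ} (ht : t < (word σ).length) :
    (word σ)[t] = wrd σ t + 1 := by
  simp only [word, List.getElem_ofFn, wrd]
  rw [dif_pos (by simpa [word] using ht)]

theorem word_getD {n : ℕ} (σ : Equiv.Perm (Fin n)) {t : ℕ} (ht : t < n) :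
    (word σ).getD t 0 = wrd σ t + 1 := by
  simp [word, wrd, ht]

theorem majL_word {n : ℕ} (σ : Equiv.Perm (Fin n)) : majL (word σ) = maj σ := by
  rw [majL_eq_sum_descentsOf, show (word σ).length = n by simp [word],
    descentsOf_congr_of_strictMono (φ := (· + 1)) add_left_strictMono
      fun t ht => word_getD σ ht]
  rfl

theorem filter_word_one_le {n : ℕ} (σ : Equiv.Perm (Fin n)) :
    (word σ).filter (fun x => decide (0 + 1 ≤ x)) = word σ :=
  List.filter_eq_self.2 fun x hx => by
    obtain ⟨j, rfl⟩ := List.mem_ofFn.1 hx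
    simp

theorem maj_eq_add_sum_erase {n : ℕ} (σ : Equiv.Perm (Fin n)) (i : ℕ) :
    maj σ = (if i ∈ Des σ then i else 0) + ∑ d ∈ (Des σ).erase i, d := by
  rw [maj]
  split_ifs with hmem
  · exact (add_sum_erase _ _ hmem).symm
  · rw [erase_eq_of_notMem hmem, zero_add]

theorem tauM_eq {n : ℕ} (β : Equiv.Perm (Fin n)) (i : ℕ) :
    tauM β i = (if i ∈ Des β then 0 else i) + #((Des β).filter (i < ·)) := by
  have hdes : #((Des β).filter (· ≤ i)) + #((Des β).filter (i < ·)) = des β := by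
    rw [des]
    simpa only [not_le] using card_filter_add_card_filter_not (s := Des β) (· ≤ i)
  rw [tauM]
  split_ifs with hmem
  · omega
  · have hbelow : (range (i + 1)).filter (· ∈ Des β) = (Des β).filter (· ≤ i) := by
      ext d
      simp only [mem_filter, mem_range, Nat.lt_succ_iff, and_comm]
    have hrange := card_filter_add_card_filter_not (s := range (i + 1)) (· ∈ Des β)
    rw [hbelow, card_range] at hrange
    omega

/-- `f` is the word `1⧢_i g` written with values starting at `0`: the word `g` of length `m`
shifted up by one, with a new least letter `0` inserted at position `i`. -/
def IsMinInsertion (f g : ℕ → ℕ) (m i : ℕ) : Prop :=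
  ∀ t ≤ m, f t = if t < i then g t + 1 else if t = i then 0 else g (t - 1) + 1

namespace IsMinInsertion

variable {f g : ℕ → ℕ} {m i : ℕ}

theorem apply_of_lt (h : IsMinInsertion f g m i) {t : ℕ} (ht : t < i) (hm : t ≤ m) :
    f t = g t + 1 := by
  rw [h t hm, if_pos ht]

theorem apply_self (h : IsMinInsertion f g m i) (hi : i ≤ m) : f i = 0 := by
  rw [h i hi, if_neg (lt_irrefl i), if_pos rfl]

theorem apply_of_gt (h : IsMinInsertion f g m i) {t : ℕ} (ht : i < t) (hm : t ≤ m) :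
    f t = g (t - 1) + 1 := by
  rw [h t hm, if_neg (by omega), if_neg (by omega)]

theorem mem_descentsOf_iff (h : IsMinInsertion f g m i) (hi : i ≤ m) :
    i ∈ descentsOf f (m + 1) ↔ 0 < i := by
  simp only [descentsOf, mem_filter, mem_Ioo]
  refine ⟨fun hd => hd.1.1, fun hpos => ⟨⟨hpos, by omega⟩, ?_⟩⟩
  rw [h.apply_self hi, h.apply_of_lt (by omega) (by omega)]
  omega

theorem erase_descentsOf (h : IsMinInsertion f g m i) (hi : i ≤ m) :
    (descentsOf f (m + 1)).erase i =
      ((descentsOf g m).erase i).image fun d => if d < i then d else d + 1 := by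
  ext d
  simp only [descentsOf, mem_erase, mem_filter, mem_Ioo, mem_image]
  constructor
  · rintro ⟨hdi, ⟨hd0, hdm⟩, hdes⟩
    rcases lt_or_gt_of_ne hdi with hlt | hgt
    · rw [h.apply_of_lt hlt (by omega), h.apply_of_lt (by omega) (by omega)] at hdes
      exact ⟨d, ⟨hdi, ⟨hd0, by omega⟩, by omega⟩, if_pos hlt⟩
    · -- position `i + 1` is never a descent: it follows the new least letter
      have hd1 : d ≠ i + 1 := by
        rintro rfl
        rw [h.apply_of_gt hgt (by omega), Nat.add_sub_cancel, h.apply_self hi] at hdes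
        omega
      rw [h.apply_of_gt hgt (by omega), h.apply_of_gt (by omega) (by omega)] at hdes
      refine ⟨d - 1, ⟨by omega, ⟨by omega, by omega⟩, by omega⟩, ?_⟩
      rw [if_neg (by omega)]
      omega
  · rintro ⟨e, ⟨hei, ⟨he0, hem⟩, hdes⟩, rfl⟩
    split_ifs with hlt
    · refine ⟨hei, ⟨he0, by omega⟩, ?_⟩
      rw [h.apply_of_lt hlt (by omega), h.apply_of_lt (by omega) (by omega)]
      omega
    · refine ⟨by omega, ⟨by omega, by omega⟩, ?_⟩
      rw [h.apply_of_gt (by omega) (by omega), h.apply_of_gt (by omega) (by omega)]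
      simpa using hdes

theorem sum_descentsOf (h : IsMinInsertion f g m i) (hi : i ≤ m) :
    ∑ d ∈ descentsOf f (m + 1), d =
      i + ∑ d ∈ (descentsOf g m).erase i, d + #((descentsOf g m).filter (i < ·)) := by
  have hsplit : ∑ d ∈ descentsOf f (m + 1), d = i + ∑ d ∈ (descentsOf f (m + 1)).erase i, d := by
    rcases Nat.eq_zero_or_pos i with rfl | hpos
    · rw [erase_eq_of_notMem (mt (h.mem_descentsOf_iff hi).1 (lt_irrefl 0)), zero_add]
    · exact (add_sum_erase _ _ ((h.mem_descentsOf_iff hi).2 hpos)).symm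
  have hinj : Set.InjOn (fun d => if d < i then d else d + 1) ((descentsOf g m).erase i) := by
    intro a ha b hb hab
    simp only [coe_erase, Set.mem_sdiff, Set.mem_singleton_iff] at ha hb
    dsimp only at hab
    split_ifs at hab <;> omega
  have hcard : #((descentsOf g m).filter (i < ·)) =
      #(((descentsOf g m).erase i).filter (i < ·)) := by
    rw [filter_erase, erase_eq_of_notMem (by simp)]
  rw [hsplit, h.erase_descentsOf hi, sum_image hinj, add_assoc, hcard, card_filter,
    ← sum_add_distrib]
  refine congrArg _ (sum_congr rfl fun d hd => ?_)
  have := ne_of_mem_erase hd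
  split_ifs <;> omega

end IsMinInsertion

theorem isMinInsertion_wrd {n i : ℕ} (hi : i ≤ n) {β : Equiv.Perm (Fin n)}
    {βi : Equiv.Perm (Fin (n + 1))}
    (hlt : ∀ (j : Fin (n + 1)) (hj : (j : ℕ) < i),
      (βi j : ℕ) = (β ⟨(j : ℕ), hj.trans_le hi⟩ : ℕ) + 1)
    (heq : ∀ j : Fin (n + 1), (j : ℕ) = i → (βi j : ℕ) = 0)
    (hgt : ∀ (j : Fin (n + 1)) (hj : i < (j : ℕ)),
      (βi j : ℕ) = (β ⟨(j : ℕ) - 1, Nat.sub_lt_right_of_lt_add (Nat.one_le_of_lt hj) j.isLt⟩ : ℕ)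
        + 1) :
    IsMinInsertion (wrd βi) (wrd β) n i := by
  intro t ht
  rw [wrd, dif_pos (by omega)]
  split_ifs with h₁ h₂
  · rw [hlt ⟨t, _⟩ h₁, wrd, dif_pos (by omega)]
  · exact heq ⟨t, _⟩ h₂
  · rw [hgt ⟨t, _⟩ (show i < t by omega), wrd, dif_pos (by omega)]

section MinInsertion

variable {n i : ℕ} {σ : Equiv.Perm (Fin n)} {σ' : Equiv.Perm (Fin (n + 1))}

theorem maj_of_isMinInsertion (h : IsMinInsertion (wrd σ') (wrd σ) n i) (hi : i ≤ n) :
    maj σ' = maj σ + tauM σ i := by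
  rw [maj, tauM_eq, maj_eq_add_sum_erase σ i, Des_eq_descentsOf, Des_eq_descentsOf,
    h.sum_descentsOf hi]
  split_ifs <;> omega

theorem word_eq_insertIdx_of_isMinInsertion (h : IsMinInsertion (wrd σ') (wrd σ) n i)
    (hi : i ≤ n) : word σ' = ((word σ).map (· + 1)).insertIdx i 1 := by
  have hlen : ((word σ).map (· + 1)).length = n := by simp [word]
  refine List.ext_getElem
    (by rw [List.length_insertIdx_of_le_length (by omega), hlen]; simp [word])
    fun t ht _ => ?_
  have htn : t ≤ n := by simpa [word] using ht
  rw [List.getElem_insertIdx, word_getElem, h t htn]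
  split_ifs <;> simp [word_getElem]

theorem filter_word_of_isMinInsertion (h : IsMinInsertion (wrd σ') (wrd σ) n i) (hi : i ≤ n)
    (c : ℕ) : (word σ').filter (fun x => decide (c + 2 ≤ x)) =
      ((word σ).filter fun x => decide (c + 1 ≤ x)).map (· + 1) := by
  rw [word_eq_insertIdx_of_isMinInsertion h hi, List.filter_insertIdx_of_neg (by simp),
    List.filter_map]
  congr 1
  exact List.filter_congr fun x _ => by simp

theorem Mc_succ_of_isMinInsertion (h : IsMinInsertion (wrd σ') (wrd σ) n i) (hi : i ≤ n)
    (t : ℕ) : Mc σ' (t + 1) = Mc σ t := by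
  rw [Mc, Mc, filter_word_of_isMinInsertion h hi t, filter_word_of_isMinInsertion h hi (t + 1),
    majL_map_of_strictMono add_left_strictMono, majL_map_of_strictMono add_left_strictMono]

theorem Mc_zero_of_isMinInsertion (h : IsMinInsertion (wrd σ') (wrd σ) n i) (hi : i ≤ n) :
    Mc σ' 0 = maj σ' - maj σ := by
  rw [Mc, filter_word_one_le, filter_word_of_isMinInsertion h hi 0, filter_word_one_le,
    majL_map_of_strictMono add_left_strictMono, majL_word, majL_word]

end MinInsertion

end Paper

/-- Single-insertion shuffle lemma for the major code: if `βi = 1⧢_i β`, then the first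
component of `Mc(βi)` is `τ_M(β)(i)` and the remaining components are `Mc(β)`. -/
theorem majcode_single_insertion (n : ℕ) (β : Equiv.Perm (Fin n)) (i : ℕ) (hi : i ≤ n)
    (βi : Equiv.Perm (Fin (n + 1)))
    (hlt : ∀ (j : Fin (n + 1)) (hj : (j : ℕ) < i),
      (βi j : ℕ) = (β ⟨(j : ℕ), by omega⟩ : ℕ) + 1)
    (heq : ∀ j : Fin (n + 1), (j : ℕ) = i → (βi j : ℕ) = 0)
    (hgt : ∀ (j : Fin (n + 1)) (hj : i < (j : ℕ)),
      (βi j : ℕ) = (β ⟨(j : ℕ) - 1, by have := j.isLt; omega⟩ : ℕ) + 1) :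
    Paper.Mc βi 0 = Paper.tauM β i ∧ ∀ t : ℕ, Paper.Mc βi (t + 1) = Paper.Mc β t := by
  have h := Paper.isMinInsertion_wrd hi hlt heq hgt
  refine ⟨?_, Paper.Mc_succ_of_isMinInsertion h hi⟩
  rw [Paper.Mc_zero_of_isMinInsertion h hi, Paper.maj_of_isMinInsertion h hi,
    Nat.add_sub_cancel_left]
end
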